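/- Let F: ℝ^{d×d} → ℝ be differentiable and W satisfy h(W∘W) = 0. If there exists λ ≥ 0 with ∇F(W) + λ ∇_W h(W∘W) = 0, then ∇F(W) = 0. That is, the KKT stationarity condition for minimizing F subject to h(W∘W) ≤ 0 can hold at a feasible point only if W is an unconstrained stationary point of F. -/
import Mathlib


attribute [local instance] Matrix.frobeniusNormedAddCommGroup Matrix.frobeniusNormedSpace

/-- `h(A) = Σ_{p=1}^d c_p tr(A^p)`. -/
noncomputable def hsum {d : ℕ} (c : ℕ → ℝ) (A : Matrix (Fin d) (Fin d) ℝ) : ℝ :=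
  ∑ p ∈ Finset.Icc 1 d, c p * (A ^ p).trace

lemma pow_entry_nonneg {d : ℕ} {A : Matrix (Fin d) (Fin d) ℝ}
    (hA : ∀ i j, 0 ≤ A i j) (p : ℕ) : ∀ i j, 0 ≤ (A ^ p) i j := by
  induction p with
  | zero =>
    intro i j
    simp only [pow_zero, Matrix.one_apply]
    split <;> norm_num
  | succ n ih =>
    intro i j
    rw [pow_succ, Matrix.mul_apply]
    exact Finset.sum_nonneg fun k _ => mul_nonneg (ih i k) (hA k j)

lemma hsum_sq_nonneg {d : ℕ} (c : ℕ → ℝ) (hc : ∀ p ∈ Finset.Icc 1 d, 0 < c p)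
    (V : Matrix (Fin d) (Fin d) ℝ) : 0 ≤ hsum c (Matrix.hadamard V V) := by
  refine Finset.sum_nonneg fun p hp => mul_nonneg (hc p hp).le ?_
  refine Finset.sum_nonneg fun i _ => pow_entry_nonneg (fun i j => ?_) p i i
  exact mul_self_nonneg (V i j)

theorem stmt11 {d : ℕ} (c : ℕ → ℝ) (hc : ∀ p ∈ Finset.Icc 1 d, 0 < c p)
    (F : Matrix (Fin d) (Fin d) ℝ → ℝ) (W : Matrix (Fin d) (Fin d) ℝ)
    (hF : DifferentiableAt ℝ F W)
    (hfeas : hsum c (Matrix.hadamard W W) = 0)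
    (hKKT : ∃ lam : ℝ, 0 ≤ lam ∧
      fderiv ℝ F W + lam • fderiv ℝ (fun V => hsum c (Matrix.hadamard V V)) W = 0) :
    fderiv ℝ F W = 0 := by
  obtain ⟨lam, _, hlam⟩ := hKKT
  have hmin : IsLocalMin (fun V => hsum c (Matrix.hadamard V V)) W :=
    Filter.Eventually.of_forall fun V => by
      simpa [hfeas] using hsum_sq_nonneg c hc V
  have h0 : fderiv ℝ (fun V => hsum c (Matrix.hadamard V V)) W = 0 :=
    hmin.fderiv_eq_zero
  rw [h0, smul_zero, add_zero] at hlam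
  exact hlam
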